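/- arXiv:1502.07738 — 9 statements merged into one kernel-verified Lean document; each statement's English description precedes it below -/
import Mathlib

section
/- For any μ > 0 and x > 0, I(μ, μ+2x) ≤ 4·I(μ, μ+x), where I(μ,d) = μ - d·log(eμ/d). -/
/-- Rate function `I(μ,d) = μ - d + d·log(d/μ)`. -/
noncomputable def rateI (μ d : ℝ) : ℝ := μ - d + d * Real.log (d / μ)

/-!
With `g t = 4 I(μ, μ + t) - I(μ, μ + 2t)` we have `g 0 = 0`, and since `∂_d I(μ, d) = log (d / μ)`,
`g' t = 2 (2 log (1 + t/μ) - log (1 + 2t/μ)) ≥ 0` because `(1 + s)² ≥ 1 + 2s`.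
So `g` is monotone on `[0, ∞)`, whence `g x ≥ 0`.
-/

open Real Set

theorem rateI_self (μ : ℝ) : rateI μ μ = 0 := by
  rcases eq_or_ne μ 0 with rfl | hμ
  · simp [rateI]
  · simp [rateI, div_self hμ]

theorem hasDerivAt_rateI {μ d : ℝ} (hμ : μ ≠ 0) (hd : d ≠ 0) :
    HasDerivAt (rateI μ) (log (d / μ)) d := by
  have hlog : HasDerivAt (fun d => log (d / μ)) (1 / μ / (d / μ)) d :=
    ((hasDerivAt_id d).div_const μ).log (div_ne_zero hd hμ)
  refine (((hasDerivAt_id' d).const_sub μ).add ((hasDerivAt_id' d).mul hlog)).congr_deriv ?_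
  field_simp
  ring

theorem log_div_add_two_mul_le {μ t : ℝ} (hμ : 0 < μ) (ht : 0 < μ + 2 * t) :
    log ((μ + 2 * t) / μ) ≤ 2 * log ((μ + t) / μ) := by
  rw [← Nat.cast_ofNat, ← log_pow]
  apply log_le_log (div_pos ht hμ)
  rw [div_pow, div_le_div_iff₀ hμ (by positivity)]
  nlinarith [sq_nonneg t]

theorem hasDerivAt_four_mul_rateI_sub {μ t : ℝ} (hμ : 0 < μ) (ht : 0 ≤ t) :
    HasDerivAt (fun t => 4 * rateI μ (μ + t) - rateI μ (μ + 2 * t))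
      (2 * (2 * log ((μ + t) / μ) - log ((μ + 2 * t) / μ))) t := by
  have h₁ : HasDerivAt (fun t => rateI μ (μ + t)) (log ((μ + t) / μ)) t :=
    (hasDerivAt_rateI hμ.ne' (by positivity)).comp_const_add μ t
  have h₂ : HasDerivAt (fun t => rateI μ (μ + 2 * t)) (log ((μ + 2 * t) / μ) * 2) t :=
    (hasDerivAt_rateI hμ.ne' (by positivity)).comp t
      (by simpa using ((hasDerivAt_id t).const_mul 2).const_add μ)
  exact ((h₁.const_mul 4).sub h₂).congr_deriv (by ring)

theorem monotoneOn_four_mul_rateI_sub {μ : ℝ} (hμ : 0 < μ) :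
    MonotoneOn (fun t => 4 * rateI μ (μ + t) - rateI μ (μ + 2 * t)) (Ici 0) := by
  refine monotoneOn_of_hasDerivWithinAt_nonneg (convex_Ici 0)
    (fun t ht => (hasDerivAt_four_mul_rateI_sub hμ ht).continuousAt.continuousWithinAt)
    (fun t ht => (hasDerivAt_four_mul_rateI_sub hμ (interior_subset ht)).hasDerivWithinAt)
    fun t ht => ?_
  rw [interior_Ici, mem_Ioi] at ht
  linarith [log_div_add_two_mul_le (t := t) hμ (by linarith)]

/-- For any μ > 0 and x > 0, `I(μ, μ+2x) ≤ 4·I(μ, μ+x)`. -/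
theorem rateI_two_x_le (μ x : ℝ) (hμ : 0 < μ) (hx : 0 < x) :
    rateI μ (μ + 2 * x) ≤ 4 * rateI μ (μ + x) := by
  have h := monotoneOn_four_mul_rateI_sub hμ self_mem_Ici (mem_Ici.2 hx.le) hx.le
  simp only [add_zero, mul_zero, rateI_self] at h
  linarith
end

section
/- Let 0 < b < a and τ = (a-b)/(log a - log b). Then I(b,τ) ≤ (√a - √b)² ≤ 2·I(b,τ), where I(μ,d) = μ - d + d·log(d/μ). -/
open Real InformationTheory

lemma sinh_le_mul_cosh {v : ℝ} (hv : 0 ≤ v) : sinh v ≤ v * cosh v := by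
  have hderiv (x : ℝ) : HasDerivAt (fun t ↦ t * cosh t - sinh t) (x * sinh x) x :=
    (((hasDerivAt_id' x).mul (hasDerivAt_cosh x)).sub (hasDerivAt_sinh x)).congr_deriv (by ring)
  have hmono := monotone_of_hasDerivAt_nonneg hderiv fun x ↦ by
    rcases le_total 0 x with hx | hx
    · exact mul_nonneg hx (sinh_nonneg_iff.2 hx)
    · exact mul_nonneg_of_nonpos_of_nonpos hx (sinh_nonpos_iff.2 hx)
  simpa using hmono hv

lemma log_cosh_le_self {v : ℝ} (hv : 0 ≤ v) : log (cosh v) ≤ v := by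
  rw [log_le_iff_le_exp (cosh_pos v), cosh_eq]
  linarith [exp_le_exp.2 (neg_le_self hv)]

lemma cosh_mul_log_cosh_le {v : ℝ} (hv : 0 ≤ v) : cosh v * log (cosh v) ≤ v * sinh v := by
  set f : ℝ → ℝ := fun t ↦ t * sinh t - cosh t * log (cosh t)
  have hderiv (x : ℝ) : HasDerivAt f (x * cosh x - sinh x * log (cosh x)) x := by
    refine (((hasDerivAt_id' x).mul (hasDerivAt_sinh x)).sub
      ((hasDerivAt_cosh x).mul ((hasDerivAt_cosh x).log (cosh_pos x).ne'))).congr_deriv ?_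
    field_simp [(cosh_pos x).ne']
    ring
  have hmono : MonotoneOn f (Set.Ici 0) := by
    refine monotoneOn_of_hasDerivWithinAt_nonneg (convex_Ici 0)
      (fun x _ ↦ (hderiv x).continuousAt.continuousWithinAt)
      (fun x _ ↦ (hderiv x).hasDerivWithinAt) fun x hx ↦ ?_
    rw [interior_Ici, Set.mem_Ioi] at hx
    nlinarith [log_cosh_le_self hx.le, sinh_lt_cosh x, sinh_pos_iff.2 hx,
      log_nonneg (one_le_cosh x)]
  simpa [f] using hmono Set.self_mem_Ici hv hv

lemma one_le_sinh_div_self {u : ℝ} (hu : 0 < u) : 1 ≤ sinh u / u := by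
  rw [le_div_iff₀ hu, one_mul]
  exact self_le_sinh_iff.2 hu.le

lemma sinh_div_self_mul_log_le {u : ℝ} (hu : 0 < u) :
    sinh u / u * log (sinh u / u) ≤ cosh u - 1 := by
  obtain ⟨v, hv, rfl⟩ : ∃ v, 0 < v ∧ 2 * v = u := ⟨u / 2, by positivity, by ring⟩
  set S := sinh (2 * v) / (2 * v)
  have hS : 0 < S := one_pos.trans_le (one_le_sinh_div_self hu)
  have hcosh := cosh_pos v
  have hS_le : S ≤ cosh v ^ 2 := by
    rw [div_le_iff₀ hu, sinh_two_mul]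
    nlinarith [sinh_le_mul_cosh hv.le]
  have hlog_le : log S ≤ 2 * (v * sinh v / cosh v) := by
    calc log S ≤ log (cosh v ^ 2) := log_le_log hS hS_le
      _ = 2 * log (cosh v) := by simp [log_pow]
      _ ≤ 2 * (v * sinh v / cosh v) := by
        gcongr
        rw [le_div_iff₀ hcosh, mul_comm]
        exact cosh_mul_log_cosh_le hv.le
  calc S * log S ≤ S * (2 * (v * sinh v / cosh v)) := by gcongr
    _ = cosh (2 * v) - 1 := by
      simp only [S, sinh_two_mul, cosh_two_mul, cosh_sq]
      field_simp
      ring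

lemma klFun_sinh_div_self_le {u : ℝ} (hu : 0 < u) : klFun (sinh u / u) ≤ cosh u - 1 := by
  rw [klFun_apply]
  linarith [sinh_div_self_mul_log_le hu, one_le_sinh_div_self hu]

lemma rateI_eq_mul_klFun {μ : ℝ} (hμ : μ ≠ 0) (d : ℝ) :
    rateI μ d = μ * klFun (d / μ) := by
  rw [rateI, klFun_apply]
  field_simp
  ring

lemma rateI_nonneg {μ d : ℝ} (hμ : 0 < μ) (hd : 0 ≤ d) : 0 ≤ rateI μ d := by
  rw [rateI_eq_mul_klFun hμ.ne']
  exact mul_nonneg hμ.le (klFun_nonneg (div_nonneg hd hμ.le))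

lemma sqrt_mul_sqrt_mul_exp_half_log_sub {a b : ℝ} (ha : 0 < a) (hb : 0 < b) :
    √a * √b * exp ((log a - log b) / 2) = a := by
  rw [sub_div, exp_sub, exp_half, exp_half, exp_log ha, exp_log hb]
  field_simp [(sqrt_pos.2 hb).ne']
  exact sq_sqrt ha.le

lemma rateI_eq_rateI_sqrt_mul_sqrt_add {a b τ : ℝ} (ha : 0 < a) (hb : 0 < b)
    (hτ : τ ≠ 0) (hτab : τ * (log a - log b) = a - b) :
    rateI b τ = rateI (√a * √b) τ + (√a - √b) ^ 2 / 2 := by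
  have hsa := sqrt_pos.2 ha
  have hsb := sqrt_pos.2 hb
  simp only [rateI]
  rw [log_div hτ hb.ne', log_div hτ (mul_pos hsa hsb).ne', log_mul hsa.ne' hsb.ne',
    log_sqrt ha.le, log_sqrt hb.le]
  linear_combination (hτab - sq_sqrt ha.le - sq_sqrt hb.le) / 2

lemma rateI_sqrt_mul_sqrt_le {a b : ℝ} (hb : 0 < b) (hba : b < a) :
    rateI (√a * √b) ((a - b) / (log a - log b)) ≤ (√a - √b) ^ 2 / 2 := by
  have ha := hb.trans hba
  set g := √a * √b
  set u := (log a - log b) / 2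
  have hu : 0 < u := by have := log_lt_log hb hba; positivity
  have hg : 0 < g := mul_pos (sqrt_pos.2 ha) (sqrt_pos.2 hb)
  have hA : g * exp u = a := sqrt_mul_sqrt_mul_exp_half_log_sub ha hb
  have hB : g * exp (-u) = b := by
    rw [show -u = (log b - log a) / 2 by ring, show g = √b * √a from mul_comm _ _]
    exact sqrt_mul_sqrt_mul_exp_half_log_sub hb ha
  have hlogMean : (a - b) / (log a - log b) = g * (sinh u / u) := by
    rw [show log a - log b = 2 * u by ring, ← hA, ← hB, sinh_eq]
    field_simp
  have hsq : (√a - √b) ^ 2 / 2 = g * (cosh u - 1) := by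
    rw [cosh_eq]
    linear_combination (sq_sqrt ha.le + sq_sqrt hb.le - hA - hB) / 2
  rw [hlogMean, hsq, rateI_eq_mul_klFun hg.ne', mul_div_cancel_left₀ _ hg.ne']
  exact mul_le_mul_of_nonneg_left (klFun_sinh_div_self_le hu) hg.le

/-- For 0 < b < a and τ = (a-b)/(log a - log b),
`I(b,τ) ≤ (√a - √b)² ≤ 2·I(b,τ)`. -/
theorem rateI_tau_bounds (a b τ : ℝ) (hb : 0 < b) (hba : b < a)
    (hτ : τ = (a - b) / (Real.log a - Real.log b)) :
    rateI b τ ≤ (Real.sqrt a - Real.sqrt b) ^ 2 ∧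
    (Real.sqrt a - Real.sqrt b) ^ 2 ≤ 2 * rateI b τ := by
  have ha : 0 < a := hb.trans hba
  have hlog : 0 < log a - log b := sub_pos.2 (log_lt_log hb hba)
  have hτpos : 0 < τ := hτ ▸ div_pos (sub_pos.2 hba) hlog
  have hsplit := rateI_eq_rateI_sqrt_mul_sqrt_add ha hb hτpos.ne'
    (by rw [hτ, div_mul_cancel₀ _ hlog.ne'])
  have hupper := hτ ▸ rateI_sqrt_mul_sqrt_le hb hba
  have hlower := rateI_nonneg (mul_pos (sqrt_pos.2 ha) (sqrt_pos.2 hb)) hτpos.le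
  constructor <;> linarith
end

section
/- Fix a > b > 0. The function ρ ↦ η(ρ,a,b) = (a+b)/2 - γ(ρ) + ((1-2ρ)τ/2)·log( ((γ(ρ)+(1-2ρ)τ)·ρ) / ((γ(ρ)-(1-2ρ)τ)·(1-ρ)) ) is convex on (0,1), where τ = (a-b)/log(a/b) and γ(ρ) = √((1-2ρ)²τ² + 4ρ(1-ρ)ab). In particular it attains its minimum at ρ = 1/2. -/
noncomputable def Fab (a b ρ t : ℝ) : ℝ :=
  ρ*(t*a+(1-t)*b) + (1-ρ)*((1-t)*a+t*b)
    - ρ*b*Real.exp (t*(Real.log a - Real.log b))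
    - (1-ρ)*a*Real.exp (-(t*(Real.log a - Real.log b)))

lemma Fab_affine (a b p q ρ₁ ρ₂ t : ℝ) (hpq : p + q = 1) :
    Fab a b (p*ρ₁+q*ρ₂) t = p * Fab a b ρ₁ t + q * Fab a b ρ₂ t := by
  have hq : q = 1 - p := by linarith
  subst hq
  simp only [Fab]; ring

lemma Fab_symm (a b ρ t : ℝ) (hb : 0 < b) (hab : b < a) :
    Fab a b (1-ρ) t = Fab a b ρ (1-t) := by
  have ha : 0 < a := hb.trans hab
  have hL : Real.exp (Real.log a - Real.log b) = a/b := by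
    rw [Real.exp_sub, Real.exp_log ha, Real.exp_log hb]
  have e1 : Real.exp ((1-t)*(Real.log a - Real.log b))
      = (a/b) * Real.exp (-(t*(Real.log a - Real.log b))) := by
    rw [← hL, ← Real.exp_add]; ring_nf
  have e2 : Real.exp (-((1-t)*(Real.log a - Real.log b)))
      = (b/a) * Real.exp (t*(Real.log a - Real.log b)) := by
    rw [show (b/a : ℝ) = (a/b)⁻¹ by rw [inv_div], ← hL, ← Real.exp_neg, ← Real.exp_add]
    ring_nf
  simp only [Fab, e1, e2]
  field_simp
  ring

lemma key_lemma (a b τ : ℝ) (γ η : ℝ → ℝ) (hb : 0 < b) (hab : b < a)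
    (hτ : τ = (a - b) / Real.log (a / b))
    (hγ : ∀ ρ : ℝ, γ ρ = Real.sqrt ((1 - 2 * ρ) ^ 2 * τ ^ 2 + 4 * ρ * (1 - ρ) * a * b))
    (hη : ∀ ρ : ℝ, η ρ = (a + b) / 2 - γ ρ +
      (1 - 2 * ρ) * τ / 2 *
        Real.log ((γ ρ + (1 - 2 * ρ) * τ) * ρ / ((γ ρ - (1 - 2 * ρ) * τ) * (1 - ρ))))
    (ρ : ℝ) (hρ0 : 0 < ρ) (hρ1 : ρ < 1) :
    ∃ T : ℝ, η ρ = Fab a b ρ T ∧ ∀ t, Fab a b ρ t ≤ η ρ := by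
  have ha : 0 < a := hb.trans hab
  set L : ℝ := Real.log a - Real.log b with hLdef
  have hL : 0 < L := sub_pos.2 (Real.log_lt_log hb hab)
  have hτL : τ * L = a - b := by
    rw [hτ, Real.log_div ha.ne' hb.ne', ← hLdef, div_mul_cancel₀ _ hL.ne']
  have h1ρ : 0 < 1 - ρ := by linarith
  set d : ℝ := 1 - 2*ρ with hddef
  have hargpos : 0 < d ^ 2 * τ ^ 2 + 4 * ρ * (1 - ρ) * a * b := by
    have h4 : 0 < 4 * ρ * (1 - ρ) * a * b := by positivity
    nlinarith [sq_nonneg (d*τ)]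
  set g : ℝ := γ ρ with hgdef
  have hg : g = Real.sqrt (d ^ 2 * τ ^ 2 + 4 * ρ * (1 - ρ) * a * b) := by
    rw [hgdef, hγ]
  have hg2 : g^2 = d ^ 2 * τ ^ 2 + 4 * ρ * (1 - ρ) * a * b := by
    rw [hg, Real.sq_sqrt hargpos.le]
  have hgpos : 0 < g := by rw [hg]; exact Real.sqrt_pos.2 hargpos
  have hprod : (g - d*τ) * (g + d*τ) = 4 * ρ * (1 - ρ) * a * b := by
    linear_combination hg2
  have h4 : 0 < 4 * ρ * (1 - ρ) * a * b := by positivity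
  have hgm : 0 < g - d*τ := by nlinarith
  have hgp : 0 < g + d*τ := by nlinarith
  set x : ℝ := (g - d*τ)/(2*ρ) with hxdef
  have hx : 0 < x := by positivity
  have hρx : ρ * x = (g - d*τ)/2 := by rw [hxdef]; field_simp
  have hxg : (1-ρ) * (a*b/x) = (g + d*τ)/2 := by
    rw [hxdef]; field_simp; linear_combination -hprod
  set T : ℝ := Real.log (x/b) / L with hTdef
  have hTL : T * L = Real.log x - Real.log b := by
    rw [hTdef, div_mul_cancel₀ _ hL.ne', Real.log_div hx.ne' hb.ne']
  have he1 : Real.exp (T*L) = x/b := by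
    rw [hTL, ← Real.log_div hx.ne' hb.ne', Real.exp_log (by positivity)]
  have he2 : Real.exp (-(T*L)) = b/x := by
    rw [Real.exp_neg, he1, inv_div]
  have hbe : ρ*b*Real.exp (T*L) = ρ*x := by
    rw [he1]; field_simp; try ring
  have hae : (1-ρ)*a*Real.exp (-(T*L)) = (1-ρ)*(a*b/x) := by
    rw [he2]; ring
  have hgsum : ρ * x + (1-ρ)*(a*b/x) = g := by rw [hρx, hxg]; ring
  have hTab : T * (a - b) = τ * (Real.log x - Real.log b) := by
    rw [← hτL, ← hTL]; ring
  have hR : (g + d*τ) * ρ / ((g - d*τ) * (1 - ρ)) = a*b/(x*x) := by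
    rw [div_eq_div_iff (by positivity) (by positivity), hxdef]
    field_simp
    linear_combination hprod
  have hlogR : Real.log ((g + d*τ) * ρ / ((g - d*τ) * (1 - ρ)))
      = Real.log a + Real.log b - 2*Real.log x := by
    rw [hR, show a*b/(x*x) = a*b/x^2 by ring, Real.log_div (by positivity) (by positivity),
      Real.log_mul ha.ne' hb.ne', Real.log_pow]
    push_cast; ring
  have hbx0 : b * Real.exp (T*L) = x := by rw [he1]; field_simp
  clear_value T x g d L
  subst hddef
  have hetaF : η ρ = Fab a b ρ T := by
    rw [hη, Fab, ← hgdef, hlogR, ← hLdef]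
    linear_combination (-(2*ρ-1))*hTab + hgsum + ((1-2*ρ)/2)*hτL + hbe + hae + τ*(ρ-1/2)*hLdef
  refine ⟨T, hetaF, fun t => ?_⟩
  have hmul1 : ρ * (x * ((t-T)*L + 1)) ≤ ρ * (b * Real.exp (t*L)) := by
    have h := Real.add_one_le_exp ((t-T)*L)
    have hbx : b * Real.exp (t*L) = x * Real.exp ((t-T)*L) := by
      rw [show t*L = T*L + (t-T)*L by ring, Real.exp_add, ← mul_assoc, hbx0]
    rw [hbx]
    exact mul_le_mul_of_nonneg_left (mul_le_mul_of_nonneg_left h hx.le) hρ0.le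
  have hmul2 : (1-ρ) * ((a*b/x) * (1 - (t-T)*L)) ≤ (1-ρ) * (a * Real.exp (-(t*L))) := by
    have h := Real.add_one_le_exp (-((t-T)*L))
    have hax : a * Real.exp (-(t*L)) = (a*b/x) * Real.exp (-((t-T)*L)) := by
      rw [show -(t*L) = -(T*L) + -((t-T)*L) by ring, Real.exp_add, ← mul_assoc, he2]
      field_simp
    rw [hax]
    refine mul_le_mul_of_nonneg_left (mul_le_mul_of_nonneg_left ?_
      (div_pos (mul_pos ha hb) hx).le) h1ρ.le
    linarith
  have hbal : ρ * x - (1-ρ)*(a*b/x) = -((1-2*ρ)*τ) := by rw [hρx, hxg]; ring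
  have hkey : ρ*(x*((t-T)*L+1)) + (1-ρ)*((a*b/x)*(1-(t-T)*L))
      = ρ*x + (1-ρ)*(a*b/x) + (t-T)*((2*ρ-1)*(a-b)) := by
    linear_combination ((t-T)*L)*hbal - ((t-T)*(1-2*ρ))*hτL
  rw [hetaF]
  calc Fab a b ρ t
      ≤ (ρ*(t*a+(1-t)*b) + (1-ρ)*((1-t)*a+t*b))
        - ρ*(x*((t-T)*L+1)) - (1-ρ)*((a*b/x)*(1-(t-T)*L)) := by
        rw [Fab, ← hLdef]; linarith [hmul1, hmul2]
    _ = Fab a b ρ T := by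
        rw [Fab, ← hLdef]
        linear_combination hbe + hae - hkey

/-- The asymmetric-SBM threshold function `ρ ↦ η(ρ,a,b)` is convex on `(0,1)`, and
in particular attains its minimum over `(0,1)` at `ρ = 1/2`. -/
theorem eta_convex (a b τ : ℝ) (γ η : ℝ → ℝ) (ha : 0 < b) (hab : b < a)
    (hτ : τ = (a - b) / Real.log (a / b))
    (hγ : ∀ ρ : ℝ, γ ρ = Real.sqrt ((1 - 2 * ρ) ^ 2 * τ ^ 2 + 4 * ρ * (1 - ρ) * a * b))
    (hη : ∀ ρ : ℝ, η ρ = (a + b) / 2 - γ ρ +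
      (1 - 2 * ρ) * τ / 2 *
        Real.log ((γ ρ + (1 - 2 * ρ) * τ) * ρ / ((γ ρ - (1 - 2 * ρ) * τ) * (1 - ρ)))) :
    ConvexOn ℝ (Set.Ioo (0 : ℝ) 1) η ∧
    ∀ ρ : ℝ, ρ ∈ Set.Ioo (0 : ℝ) 1 → η (1 / 2) ≤ η ρ := by
  have key := key_lemma a b τ γ η ha hab hτ hγ hη
  constructor
  · refine ⟨convex_Ioo 0 1, ?_⟩
    intro ρ₁ h₁ ρ₂ h₂ p q hp hq hpq
    have hmem := (convex_Ioo (0:ℝ) 1) h₁ h₂ hp hq hpq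
    simp only [smul_eq_mul] at hmem ⊢
    obtain ⟨T, hT1, _⟩ := key (p*ρ₁+q*ρ₂) hmem.1 (by linarith [hmem.2])
    obtain ⟨T1, _, h12⟩ := key ρ₁ h₁.1 h₁.2
    obtain ⟨T2, _, h22⟩ := key ρ₂ h₂.1 h₂.2
    rw [hT1, Fab_affine a b p q ρ₁ ρ₂ T hpq]
    have := h12 T
    have := h22 T
    nlinarith [mul_le_mul_of_nonneg_left (h12 T) hp, mul_le_mul_of_nonneg_left (h22 T) hq]
  · intro ρ hρ
    obtain ⟨T, hT1, _⟩ := key (1/2) (by norm_num) (by norm_num)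
    obtain ⟨Tρ, _, hρ2⟩ := key ρ hρ.1 hρ.2
    have h1 : Fab a b ρ T ≤ η ρ := hρ2 T
    have h2 : Fab a b (1-ρ) T ≤ η ρ := by
      rw [Fab_symm a b ρ T ha hab]; exact hρ2 (1-T)
    have h3 : Fab a b ((1/2)*ρ + (1/2)*(1-ρ)) T
        = (1/2) * Fab a b ρ T + (1/2) * Fab a b (1-ρ) T :=
      Fab_affine a b (1/2) (1/2) ρ (1-ρ) T (by norm_num)
    rw [show (1/2 : ℝ)*ρ + (1/2)*(1-ρ) = 1/2 by ring] at h3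
    rw [hT1, h3]
    linarith
end

section
/- Fix a > b > 0. The limit as ρ → 0⁺ of η(ρ,a,b) equals (a+b)/2 - τ·log(e√(ab)/τ), where τ = (a-b)/log(a/b) and η is the asymmetric SBM threshold function. -/
open Filter Topology

/-!
Write `c = (1 - 2ρ)τ`. Since `γ² - c² = 4ρ(1 - ρ)ab`, the argument of the logarithm in `η`, which
is of the form `0/0` at `ρ = 0`, equals `(γ + c)² / (4(1 - ρ)²ab)` for `0 < ρ < 1/2`. This new
expression is continuous at `ρ = 0` with value `τ²/(ab)` because `γ(0) = τ > 0`, so `η` tends to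
`(a + b)/2 - τ + (τ/2) log(τ²/(ab))`, which is the claimed limit.
-/

lemma add_mul_div_sub_mul_eq_sq_div {a b c γ ρ : ℝ}
    (hγ : γ ^ 2 = c ^ 2 + 4 * ρ * (1 - ρ) * a * b) (hγc : γ ≠ c) (hρ : ρ ≠ 1) (hab : a * b ≠ 0) :
    (γ + c) * ρ / ((γ - c) * (1 - ρ)) = (γ + c) ^ 2 / (4 * (1 - ρ) ^ 2 * (a * b)) := by
  have hρ' : 1 - ρ ≠ 0 := sub_ne_zero.2 hρ.symm
  rw [div_eq_div_iff (mul_ne_zero (sub_ne_zero.2 hγc) hρ') (by positivity)]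
  linear_combination (-(γ + c) * (1 - ρ)) * hγ

lemma lt_sqrt_sq_add {c q : ℝ} (hq : 0 < q) : c < √(c ^ 2 + q) :=
  calc c ≤ |c| := le_abs_self c
    _ = √(c ^ 2) := (Real.sqrt_sq_eq_abs c).symm
    _ < √(c ^ 2 + q) := Real.sqrt_lt_sqrt (sq_nonneg c) (lt_add_of_pos_right _ hq)

lemma mul_log_exp_mul_sqrt_div {τ p : ℝ} (hτ : 0 < τ) (hp : 0 < p) :
    τ * Real.log (Real.exp 1 * √p / τ) = τ - τ / 2 * Real.log (τ ^ 2 / p) := by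
  rw [Real.log_div (by positivity) hτ.ne', Real.log_mul (Real.exp_ne_zero 1) (by positivity),
    Real.log_exp, Real.log_sqrt hp.le, Real.log_div (by positivity) hp.ne', Real.log_pow]
  ring

/-- As `ρ → 0⁺`, the asymmetric-SBM threshold `η(ρ,a,b)` converges to
`(a+b)/2 - τ·log(e√(ab)/τ)`. -/
theorem eta_limit_zero (a b τ : ℝ) (γ η : ℝ → ℝ) (ha : 0 < b) (hab : b < a)
    (hτ : τ = (a - b) / Real.log (a / b))
    (hγ : ∀ ρ : ℝ, γ ρ = Real.sqrt ((1 - 2 * ρ) ^ 2 * τ ^ 2 + 4 * ρ * (1 - ρ) * a * b))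
    (hη : ∀ ρ : ℝ, η ρ = (a + b) / 2 - γ ρ +
      (1 - 2 * ρ) * τ / 2 *
        Real.log ((γ ρ + (1 - 2 * ρ) * τ) * ρ / ((γ ρ - (1 - 2 * ρ) * τ) * (1 - ρ)))) :
    Tendsto η (𝓝[>] (0 : ℝ))
      (𝓝 ((a + b) / 2 - τ * Real.log (Real.exp 1 * Real.sqrt (a * b) / τ))) := by
  have hab0 : 0 < a * b := mul_pos (ha.trans hab) ha
  have hτ0 : 0 < τ := hτ ▸ div_pos (sub_pos.2 hab) (Real.log_pos ((one_lt_div ha).2 hab))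
  have hγ_cont : Continuous γ := funext hγ ▸ by fun_prop
  have hγ0 : γ 0 = τ := by simp [hγ 0, Real.sqrt_sq hτ0.le]
  have hη_eq : ∀ᶠ ρ in 𝓝[>] 0, (a + b) / 2 - γ ρ + (1 - 2 * ρ) * τ / 2 *
      Real.log ((γ ρ + (1 - 2 * ρ) * τ) ^ 2 / (4 * (1 - ρ) ^ 2 * (a * b))) = η ρ := by
    filter_upwards [Ioo_mem_nhdsGT (by norm_num : (0 : ℝ) < 1 / 2)] with ρ ⟨hρ0, hρ⟩
    have hq : 0 < 4 * ρ * (1 - ρ) * a * b := by nlinarith [mul_pos hρ0 hab0]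
    have hγ_gt : (1 - 2 * ρ) * τ < γ ρ := by
      rw [hγ, ← mul_pow]; exact lt_sqrt_sq_add hq
    have hγ_sq : γ ρ ^ 2 = ((1 - 2 * ρ) * τ) ^ 2 + 4 * ρ * (1 - ρ) * a * b := by
      rw [hγ, Real.sq_sqrt (by positivity), mul_pow]
    rw [hη, add_mul_div_sub_mul_eq_sq_div hγ_sq hγ_gt.ne' (by linarith) hab0.ne']
  have hcont : ContinuousAt (fun ρ => (a + b) / 2 - γ ρ + (1 - 2 * ρ) * τ / 2 *
      Real.log ((γ ρ + (1 - 2 * ρ) * τ) ^ 2 / (4 * (1 - ρ) ^ 2 * (a * b)))) 0 := by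
    fun_prop (disch := simp only [hγ0]; positivity)
  convert hcont.continuousWithinAt.tendsto.congr' hη_eq using 2
  simp only [hγ0, mul_zero, sub_zero, one_mul, one_pow, mul_one]
  rw [mul_log_exp_mul_sqrt_div hτ0 hab0, show (τ + τ) ^ 2 / (4 * (a * b)) = τ ^ 2 / (a * b) by ring]
  ring
end

section
/- Let A be an n×n real symmetric matrix that is the adjacency matrix of a graph, σ* ∈ {±1}ⁿ, and Y* = σ*(σ*)ᵀ. Suppose there exist a diagonal matrix D* and λ* ∈ ℝ such that S* := D* - A + λ*·J (J the all-ones matrix) satisfies: S* is positive semidefinite, the second smallest eigenvalue of S* is strictly positive, and S*σ* = 0. Then Y* is the unique maximizer of ⟨A,Y⟩ over all symmetric positive semidefinite matrices Y with Yᵢᵢ = 1 for all i and ⟨J,Y⟩ = ⟨J,Y*⟩. -/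
/-!
Since `A = D + λJ - S`, every feasible `Y` has `⟨A,Y⟩ = tr D + λ⟨J,Y*⟩ - ⟨S,Y⟩`, while
`⟨S,Y*⟩ = σᵀSσ = 0`; so the optimality gap `⟨A,Y*⟩ - ⟨A,Y⟩` is `⟨S,Y⟩ ≥ 0`. If the gap vanishes,
write `Y = BᵀB`: then `∑ᵢ bᵢᵀ S bᵢ = 0` forces every row `bᵢ` into `ker S = span σ`, so `Y` is a
multiple of `σσᵀ`, and the unit diagonal makes it `σσᵀ`.
-/

open Matrix

/-- Trace inner product `⟨A,Y⟩ = ∑ᵢⱼ Aᵢⱼ Yᵢⱼ`. -/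
def traceInner {n : ℕ} (A Y : Matrix (Fin n) (Fin n) ℝ) : ℝ :=
  ∑ i, ∑ j, A i j * Y i j

section TraceInner

variable {n : ℕ}

lemma traceInner_eq_sum_dotProduct (A Y : Matrix (Fin n) (Fin n) ℝ) :
    traceInner A Y = ∑ i, A i ⬝ᵥ Y i := rfl

lemma traceInner_add_left (A B Y : Matrix (Fin n) (Fin n) ℝ) :
    traceInner (A + B) Y = traceInner A Y + traceInner B Y := by
  simp only [traceInner, Matrix.add_apply, add_mul, Finset.sum_add_distrib]

lemma traceInner_sub_left (A B Y : Matrix (Fin n) (Fin n) ℝ) :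
    traceInner (A - B) Y = traceInner A Y - traceInner B Y := by
  simp only [traceInner, Matrix.sub_apply, sub_mul, Finset.sum_sub_distrib]

lemma traceInner_smul_left (c : ℝ) (A Y : Matrix (Fin n) (Fin n) ℝ) :
    traceInner (c • A) Y = c * traceInner A Y := by
  simp only [traceInner, Matrix.smul_apply, smul_eq_mul, mul_assoc, Finset.mul_sum]

lemma traceInner_diagonal_left (d : Fin n → ℝ) (Y : Matrix (Fin n) (Fin n) ℝ) :
    traceInner (diagonal d) Y = ∑ i, d i * Y i i := by
  simp only [traceInner_eq_sum_dotProduct, diagonal_dotProduct]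

lemma traceInner_vecMulVec_right (S : Matrix (Fin n) (Fin n) ℝ) (x y : Fin n → ℝ) :
    traceInner S (vecMulVec x y) = x ⬝ᵥ S *ᵥ y := by
  simp only [traceInner_eq_sum_dotProduct, dotProduct, mulVec, Finset.mul_sum, vecMulVec_apply]
  exact Finset.sum_congr rfl fun i _ => Finset.sum_congr rfl fun j _ => by ring

lemma traceInner_transpose_mul_self_right (S B : Matrix (Fin n) (Fin n) ℝ) :
    traceInner S (Bᵀ * B) = ∑ i, B i ⬝ᵥ S *ᵥ B i := by
  simp only [traceInner, dotProduct, mulVec, mul_apply, transpose_apply, Finset.mul_sum]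
  conv_rhs => rw [Finset.sum_comm]
  refine Finset.sum_congr rfl fun j _ => ?_
  conv_lhs => rw [Finset.sum_comm]
  exact Finset.sum_congr rfl fun k _ => Finset.sum_congr rfl fun i _ => by ring

end TraceInner

section PosSemidef

variable {n : ℕ} {S : Matrix (Fin n) (Fin n) ℝ}

lemma Matrix.PosSemidef.exists_eq_transpose_mul_self {Y : Matrix (Fin n) (Fin n) ℝ}
    (hY : Y.PosSemidef) : ∃ B : Matrix (Fin n) (Fin n) ℝ, Y = Bᵀ * B := by
  open scoped MatrixOrder in
  obtain ⟨B, hB⟩ := CStarAlgebra.nonneg_iff_eq_star_mul_self.mp hY.nonneg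
  exact ⟨B, by rwa [star_eq_conjTranspose, conjTranspose_eq_transpose_of_trivial] at hB⟩

lemma Matrix.PosSemidef.traceInner_transpose_mul_self_nonneg (hS : S.PosSemidef)
    (B : Matrix (Fin n) (Fin n) ℝ) : 0 ≤ traceInner S (Bᵀ * B) := by
  rw [traceInner_transpose_mul_self_right]
  exact Finset.sum_nonneg fun i _ => by simpa using hS.dotProduct_mulVec_nonneg (B i)

lemma Matrix.PosSemidef.traceInner_nonneg (hS : S.PosSemidef) {Y : Matrix (Fin n) (Fin n) ℝ}
    (hY : Y.PosSemidef) : 0 ≤ traceInner S Y := by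
  obtain ⟨B, rfl⟩ := hY.exists_eq_transpose_mul_self
  exact hS.traceInner_transpose_mul_self_nonneg B

lemma Matrix.PosSemidef.mulVec_row_eq_zero_of_traceInner_eq_zero (hS : S.PosSemidef)
    {B : Matrix (Fin n) (Fin n) ℝ} (h : traceInner S (Bᵀ * B) = 0) (i : Fin n) :
    S *ᵥ B i = 0 := by
  have hrow_nonneg : ∀ k, 0 ≤ B k ⬝ᵥ S *ᵥ B k := fun k => by
    simpa using hS.dotProduct_mulVec_nonneg (B k)
  rw [traceInner_transpose_mul_self_right,
    Finset.sum_eq_zero_iff_of_nonneg fun k _ => hrow_nonneg k] at h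
  exact (hS.dotProduct_mulVec_zero_iff (B i)).mp (by simpa using h i (Finset.mem_univ i))

end PosSemidef

lemma transpose_mul_self_eq_of_row_eq_smul {n : ℕ} {B : Matrix (Fin n) (Fin n) ℝ}
    {c σ : Fin n → ℝ} (h : ∀ i, B i = c i • σ) :
    Bᵀ * B = (c ⬝ᵥ c) • vecMulVec σ σ := by
  have hB : B = vecMulVec c σ := Matrix.ext fun i j => by simp [h i, vecMulVec_apply]
  rw [hB, transpose_vecMulVec, vecMulVec_mul_vecMulVec, vecMulVec_smul]

theorem sdp_dual_certificate_asym_sbm_general {n : ℕ}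
    (A : Matrix (Fin n) (Fin n) ℝ)
    (σ : Fin n → ℝ) (hσ : ∀ i, σ i = 1 ∨ σ i = -1)
    (d : Fin n → ℝ) (lam : ℝ)
    (Ystar : Matrix (Fin n) (Fin n) ℝ) (hYstar : Ystar = Matrix.of fun i j => σ i * σ j)
    (J : Matrix (Fin n) (Fin n) ℝ)
    (S : Matrix (Fin n) (Fin n) ℝ)
    (hS : S = Matrix.diagonal d - A + lam • J)
    (hpsd : S.PosSemidef)
    (hker : ∀ x : Fin n → ℝ, S.mulVec x = 0 → ∃ c : ℝ, x = c • σ)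
    (hSσ : S.mulVec σ = 0) :
    ∀ Y : Matrix (Fin n) (Fin n) ℝ,
      Y.PosSemidef → (∀ i, Y i i = 1) → traceInner J Y = traceInner J Ystar →
        traceInner A Y ≤ traceInner A Ystar ∧
        (traceInner A Y = traceInner A Ystar → Y = Ystar) := by
  intro Y hY hdiag hJY
  have hσσ : ∀ i, σ i * σ i = 1 := fun i => by rcases hσ i with h | h <;> simp [h]
  replace hYstar : Ystar = vecMulVec σ σ := hYstar
  have duality : ∀ Z : Matrix (Fin n) (Fin n) ℝ, (∀ i, Z i i = 1) →
      traceInner A Z = ∑ i, d i + lam * traceInner J Z - traceInner S Z := fun Z hZ => by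
    simp only [hS, traceInner_add_left, traceInner_sub_left, traceInner_smul_left,
      traceInner_diagonal_left, hZ, mul_one]
    ring
  have hSYstar : traceInner S Ystar = 0 := by
    rw [hYstar, traceInner_vecMulVec_right, hSσ, dotProduct_zero]
  have gap : traceInner A Ystar - traceInner A Y = traceInner S Y := by
    rw [duality Y hdiag, duality Ystar (fun i => by simp [hYstar, vecMulVec_apply, hσσ]), hJY,
      hSYstar]
    ring
  refine ⟨by linarith [hpsd.traceInner_nonneg hY], fun heq => ?_⟩
  obtain ⟨B, rfl⟩ := hY.exists_eq_transpose_mul_self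
  have hrows : ∀ i, ∃ c : ℝ, B i = c • σ := fun i =>
    hker _ (hpsd.mulVec_row_eq_zero_of_traceInner_eq_zero (by linarith) i)
  choose c hc using hrows
  rw [transpose_mul_self_eq_of_row_eq_smul hc] at hdiag ⊢
  ext j k
  have hcc : c ⬝ᵥ c = 1 := by simpa [vecMulVec_apply, hσσ] using hdiag j
  simp [hcc, hYstar]

/-- Dual certificate lemma for the SDP relaxation in the binary asymmetric SBM.
If `S* = D* - A + λ*·J` is PSD, has `σ*` in its kernel, and its second smallest
eigenvalue is positive (equivalently, given PSD and `S*σ* = 0`, its kernel is exactly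
the span of `σ*`), then `Y* = σ*(σ*)ᵀ` is the unique maximizer of `⟨A,Y⟩` over
PSD matrices with unit diagonal and `⟨J,Y⟩ = ⟨J,Y*⟩`. -/
theorem sdp_dual_certificate_asym_sbm {n : ℕ}
    (A : Matrix (Fin n) (Fin n) ℝ) (hA : A.IsSymm)
    (σ : Fin n → ℝ) (hσ : ∀ i, σ i = 1 ∨ σ i = -1)
    (d : Fin n → ℝ) (lam : ℝ)
    (Ystar : Matrix (Fin n) (Fin n) ℝ) (hYstar : Ystar = Matrix.of fun i j => σ i * σ j)
    (J : Matrix (Fin n) (Fin n) ℝ) (hJ : J = Matrix.of fun _ _ => (1 : ℝ))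
    (S : Matrix (Fin n) (Fin n) ℝ)
    (hS : S = Matrix.diagonal d - A + lam • J)
    (hpsd : S.PosSemidef)
    (hker : ∀ x : Fin n → ℝ, S.mulVec x = 0 → ∃ c : ℝ, x = c • σ)
    (hSσ : S.mulVec σ = 0) :
    ∀ Y : Matrix (Fin n) (Fin n) ℝ,
      Y.PosSemidef → (∀ i, Y i i = 1) → traceInner J Y = traceInner J Ystar →
        traceInner A Y ≤ traceInner A Ystar ∧
        (traceInner A Y = traceInner A Ystar → Y = Ystar) :=
  sdp_dual_certificate_asym_sbm_general A σ hσ d lam Ystar hYstar J S hS hpsd hker hSσ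
end

section
/- Let X ~ Binom(m, a·log n/n) where m = ρn + o(n) for some ρ > 0 and a > 0, and let kₙ ∈ [m] with kₙ = τρ·log n + o(log n) for some 0 ≤ τ ≤ a. Then P(X ≤ kₙ) = n^{-ρ(a - τ·log(ea/τ)) + o(1)} as n → ∞. -/
/-!
Write `μ = m p` and let `k ≈ c L`, `μ ≈ x L` with `L → ∞` and `c ≤ x`. The lower tail
`P(X ≤ k)` is squeezed between the single term `P(X = k)` and the Chernoff bound
`s⁻ᵏ E[sˣ] ≤ s⁻ᵏ exp(-μ(1 - s))` at `s = min 1 (k / μ)`. Stirling's formula turns the first into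
`exp(k log(eμ/k) - μ + O(log k))`, and the second is at most `exp(max 0 (k log(μ/k)) + k - μ)`;
so `log P(X ≤ k) / L → c log(ex/c) - x`. The theorem is the case `L = log n`, `p = a log n / n`,
`x = ρa`, `c = τρ`.
-/

open Filter Topology

/-- Binomial lower-tail probability `P(X ≤ k)` for `X ~ Binom(m, p)`. -/
noncomputable def binomCdf (p : ℝ) (m k : ℕ) : ℝ :=
  ∑ j ∈ Finset.range (k + 1), (m.choose j : ℝ) * p ^ j * (1 - p) ^ (m - j)

open Real Finset
open scoped Nat

theorem Stirling.log_factorial_le {n : ℕ} (hn : n ≠ 0) :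
    log n ! ≤ n * log n - n + log n / 2 + 1 := by
  have hseq : Stirling.stirlingSeq n ≤ exp 1 / √2 := by
    obtain ⟨n, rfl⟩ := Nat.exists_eq_succ_of_ne_zero hn
    simpa using Stirling.stirlingSeq'_antitone (Nat.zero_le n)
  have hpos : (0 : ℝ) < √(2 * n) * (n / exp 1) ^ n := by positivity
  rw [Stirling.stirlingSeq, div_le_iff₀ hpos] at hseq
  calc log n ! ≤ log (exp 1 / √2 * (√(2 * n) * (n / exp 1) ^ n)) :=
        log_le_log (by positivity) hseq
    _ = n * log n - n + log n / 2 + 1 := by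
        rw [log_mul (by positivity) hpos.ne', log_mul (by positivity) (by positivity),
          log_div (by positivity) (by positivity), log_exp, log_pow,
          log_div (by positivity) (by positivity), log_exp, log_sqrt (by positivity),
          log_sqrt (by positivity), log_mul (by positivity) (by positivity)]
        ring

variable {p : ℝ} {m k : ℕ}

theorem choose_mul_pow_le_binomCdf (hp0 : 0 ≤ p) (hp1 : p ≤ 1) :
    (m.choose k : ℝ) * p ^ k * (1 - p) ^ (m - k) ≤ binomCdf p m k :=
  single_le_sum (f := fun j ↦ (m.choose j : ℝ) * p ^ j * (1 - p) ^ (m - j))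
    (fun j _ ↦ by have := sub_nonneg.2 hp1; positivity) (self_mem_range_succ k)

theorem binomCdf_pos (hp0 : 0 < p) (hp1 : p < 1) (hkm : k ≤ m) : 0 < binomCdf p m k := by
  have : (0 : ℝ) < m.choose k := by exact_mod_cast Nat.choose_pos hkm
  have := sub_pos.2 hp1
  exact lt_of_lt_of_le (by positivity) (choose_mul_pow_le_binomCdf hp0.le hp1.le)

theorem binomCdf_le_chernoff {s : ℝ} (hp0 : 0 ≤ p) (hp1 : p ≤ 1) (hs0 : 0 < s) (hs1 : s ≤ 1)
    (hkm : k ≤ m) : binomCdf p m k ≤ (p * s + (1 - p)) ^ m / s ^ k := by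
  have hq := sub_nonneg.2 hp1
  rw [add_pow, le_div_iff₀ (pow_pos hs0 k), binomCdf, sum_mul]
  calc ∑ j ∈ range (k + 1), (m.choose j : ℝ) * p ^ j * (1 - p) ^ (m - j) * s ^ k
      ≤ ∑ j ∈ range (k + 1), (p * s) ^ j * (1 - p) ^ (m - j) * m.choose j := by
        refine sum_le_sum fun j hj ↦ ?_
        have hsj : s ^ k ≤ s ^ j :=
          pow_le_pow_of_le_one hs0.le hs1 (Nat.lt_succ_iff.1 (mem_range.1 hj))
        calc (m.choose j : ℝ) * p ^ j * (1 - p) ^ (m - j) * s ^ k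
            ≤ (m.choose j : ℝ) * p ^ j * (1 - p) ^ (m - j) * s ^ j := by gcongr
          _ = (p * s) ^ j * (1 - p) ^ (m - j) * m.choose j := by ring
    _ ≤ ∑ j ∈ range (m + 1), (p * s) ^ j * (1 - p) ^ (m - j) * m.choose j :=
        sum_le_sum_of_subset_of_nonneg (range_subset_range.2 (by omega))
          fun _ _ _ ↦ by positivity

theorem log_binomCdf_le (hp0 : 0 < p) (hp1 : p < 1) (hk : 0 < k) (hkm : k ≤ m) :
    log (binomCdf p m k) ≤ max 0 (k * log (m * p / k)) + k - m * p := by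
  have hP := binomCdf_pos hp0 hp1 hkm
  have hk' : (0 : ℝ) < k := by exact_mod_cast hk
  have hm' : (0 : ℝ) < m := by exact_mod_cast hk.trans_le hkm
  rcases lt_or_ge (m * p : ℝ) k with hμk | hkμ
  · have h1 : binomCdf p m k ≤ 1 := by
      simpa using binomCdf_le_chernoff hp0.le hp1.le one_pos le_rfl hkm
    linarith [log_nonpos hP.le h1, le_max_left 0 (k * log (m * p / k))]
  · set s : ℝ := k / (m * p) with hs
    have hs0 : 0 < s := by positivity
    have hs1 : s ≤ 1 := div_le_one_of_le₀ hkμ (by positivity)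
    have hbound := log_le_log hP (binomCdf_le_chernoff hp0.le hp1.le hs0 hs1 hkm)
    have hps : p * s = k / m := by rw [hs]; field_simp
    have hbase : log (p * s + (1 - p)) ≤ k / m - p := by
      linarith [log_le_sub_one_of_pos (show 0 < p * s + (1 - p) by positivity)]
    rw [log_div (by positivity) (by positivity), log_pow, log_pow] at hbound
    have hlogs : log s = -log (m * p / k) := by rw [hs, ← log_inv, inv_div]
    have hexp : (m : ℝ) * (k / m - p) = k - m * p := by field_simp
    rw [hlogs] at hbound
    linarith [mul_le_mul_of_nonneg_left hbase hm'.le, le_max_right 0 (k * log (m * p / k))]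

theorem le_log_binomCdf (hp0 : 0 < p) (hp1 : p < 1) (hk : 0 < k) (hkm : k ≤ m) :
    k * log ((m - k + 1) * p / k) + k - log k / 2 - 1 - m * p / (1 - p)
      ≤ log (binomCdf p m k) := by
  have hq := sub_pos.2 hp1
  have hk' : (0 : ℝ) < k := by exact_mod_cast hk
  have hd : ((m + 1 - k : ℕ) : ℝ) = m - k + 1 := by
    push_cast [Nat.cast_sub (hkm.trans (Nat.le_succ m))]
    ring
  have hd1 : (1 : ℝ) ≤ m - k + 1 := by rw [← hd]; exact_mod_cast (by omega : 1 ≤ m + 1 - k)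
  have hchoose : k * log (m - k + 1) - log k ! ≤ log (m.choose k) := by
    have := Nat.pow_le_choose (α := ℝ) k m
    rw [hd] at this
    rw [← log_pow, ← log_div (by positivity) (by positivity)]
    exact log_le_log (by positivity) this
  have hfact := Stirling.log_factorial_le hk.ne'
  have hlog1p : -(p / (1 - p)) ≤ log (1 - p) := by
    have := one_sub_inv_le_log_of_pos hq
    have e : 1 - (1 - p)⁻¹ = -(p / (1 - p)) := by field_simp; ring
    linarith
  have htail : -(m * p / (1 - p)) ≤ ((m - k : ℕ) : ℝ) * log (1 - p) := by
    have hmk : ((m - k : ℕ) : ℝ) ≤ m := by exact_mod_cast Nat.sub_le m k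
    have hlogneg : log (1 - p) ≤ 0 := log_nonpos hq.le (by linarith)
    have e : (m : ℝ) * -(p / (1 - p)) = -(m * p / (1 - p)) := by ring
    linarith [mul_le_mul_of_nonneg_left hlog1p (Nat.cast_nonneg (α := ℝ) m),
      mul_le_mul_of_nonpos_right hmk hlogneg]
  have hchoose_pos : (0 : ℝ) < m.choose k := by exact_mod_cast Nat.choose_pos hkm
  have hterm := log_le_log (by positivity)
    (choose_mul_pow_le_binomCdf (m := m) (k := k) hp0.le hp1.le)
  rw [log_mul (by positivity) (by positivity), log_mul (by positivity) (by positivity),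
    log_pow, log_pow] at hterm
  rw [log_div (by positivity) hk'.ne', log_mul (by positivity) hp0.ne']
  linarith

section Asymptotics

variable {ι : Type*} {l : Filter ι} {L : ι → ℝ}

theorem tendsto_log_div_of_tendsto_div {u : ι → ℝ} {c : ℝ} (hL : Tendsto L l atTop)
    (hu : ∀ᶠ i in l, 1 ≤ u i) (huL : Tendsto (fun i ↦ u i / L i) l (𝓝 c)) :
    Tendsto (fun i ↦ log (u i) / L i) l (𝓝 0) := by
  have hlogL : Tendsto (fun i ↦ log (L i) / L i) l (𝓝 0) :=
    (isLittleO_log_id_atTop.tendsto_div_nhds_zero).comp hL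
  have hupper := ((huL.sub_const 1).div_atTop hL).add hlogL
  rw [add_zero] at hupper
  refine tendsto_of_tendsto_of_tendsto_of_le_of_le' tendsto_const_nhds hupper ?_ ?_
  · filter_upwards [hu, hL.eventually_gt_atTop 0] with i hui hLi
    exact div_nonneg (log_nonneg hui) hLi.le
  · filter_upwards [hu, hL.eventually_gt_atTop 0] with i hui hLi
    have h : log (u i) - log (L i) ≤ u i / L i - 1 := by
      rw [← log_div (by linarith) hLi.ne']
      exact log_le_sub_one_of_pos (div_pos (by linarith) hLi)
    rw [← add_div]
    exact div_le_div_of_nonneg_right (by linarith) hLi.le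

theorem tendsto_mul_log_div_div {u v : ι → ℝ} {c x : ℝ} (hu : ∀ᶠ i in l, 0 < u i)
    (hv : ∀ᶠ i in l, 0 < v i) (hL : ∀ᶠ i in l, 0 < L i)
    (huL : Tendsto (fun i ↦ u i / L i) l (𝓝 c)) (hvL : Tendsto (fun i ↦ v i / L i) l (𝓝 x))
    (hx : x ≠ 0) :
    Tendsto (fun i ↦ u i * log (v i / u i) / L i) l (𝓝 (c * log (x / c))) := by
  have h := (huL.mul (hvL.log hx)).sub ((continuous_mul_log.tendsto c).comp huL)
  have hlim : c * log x - c * log c = c * log (x / c) := by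
    rcases eq_or_ne c 0 with rfl | hc
    · simp
    · rw [log_div hx hc]; ring
  rw [hlim] at h
  refine h.congr' ?_
  filter_upwards [hu, hv, hL] with i hui hvi hLi
  simp only [Function.comp_apply]
  rw [log_div hvi.ne' hLi.ne', log_div hui.ne' hLi.ne', log_div hvi.ne' hui.ne']
  ring

variable {m k : ι → ℕ} {p : ι → ℝ} {c x : ℝ}

theorem tendsto_log_binomCdf_div (hL : Tendsto L l atTop) (hp : Tendsto p l (𝓝 0))
    (hp0 : ∀ᶠ i in l, 0 < p i) (hkm : ∀ᶠ i in l, 1 ≤ k i ∧ k i ≤ m i)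
    (hk : Tendsto (fun i ↦ (k i : ℝ) / L i) l (𝓝 c))
    (hm : Tendsto (fun i ↦ m i * p i / L i) l (𝓝 x)) (hx : 0 < x) (hcx : c ≤ x) :
    Tendsto (fun i ↦ log (binomCdf (p i) (m i) (k i)) / L i) l
      (𝓝 (c * log (exp 1 * x / c) - x)) := by
  obtain rfl | hl := l.eq_or_neBot
  · exact tendsto_bot
  have hLpos := hL.eventually_gt_atTop 0
  have hp1 : ∀ᶠ i in l, p i < 1 := hp.eventually (gt_mem_nhds one_pos)
  have hk1 : ∀ᶠ i in l, (1 : ℝ) ≤ k i := hkm.mono fun i h ↦ by exact_mod_cast h.1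
  have hkpos : ∀ᶠ i in l, (0 : ℝ) < k i := hk1.mono fun i h ↦ by linarith
  have hc : 0 ≤ c := ge_of_tendsto hk <| by
    filter_upwards [hLpos] with i hLi
    positivity
  have hcx' : 0 ≤ c * log (x / c) := by
    rcases hc.eq_or_lt with rfl | hc
    · simp
    · exact mul_nonneg hc.le (log_nonneg ((one_le_div hc).2 hcx))
  have hrate : c * log (x / c) + c - x = c * log (exp 1 * x / c) - x := by
    rcases eq_or_ne c 0 with rfl | hc
    · simp
    · rw [mul_div_assoc, log_mul (exp_ne_zero 1) (div_ne_zero hx.ne' hc), log_exp]; ring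
  have hkp : Tendsto (fun i ↦ k i * p i / L i) l (𝓝 0) := by
    simpa [mul_div_right_comm] using hk.mul hp
  have hpL : Tendsto (fun i ↦ p i / L i) l (𝓝 0) := hp.div_atTop hL
  have hlogk : Tendsto (fun i ↦ log (k i) / L i) l (𝓝 0) :=
    tendsto_log_div_of_tendsto_div hL hk1 hk
  have hmpos : ∀ᶠ i in l, (0 : ℝ) < m i * p i := by
    filter_upwards [hkm, hp0] with i hi hpi
    have : (0 : ℝ) < m i := by exact_mod_cast hi.1.trans hi.2
    positivity
  have hlower : Tendsto (fun i ↦ (k i * log ((m i - k i + 1) * p i / k i) + k i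
      - log (k i) / 2 - 1 - m i * p i / (1 - p i)) / L i) l
      (𝓝 (c * log (exp 1 * x / c) - x)) := by
    have hv : Tendsto (fun i ↦ (m i - k i + 1 : ℝ) * p i / L i) l (𝓝 x) := by
      simpa [sub_mul, add_mul, add_div, sub_div] using (hm.sub hkp).add hpL
    have hmain := tendsto_mul_log_div_div hkpos (by
      filter_upwards [hkm, hp0] with i hi hpi
      have : (1 : ℝ) ≤ m i - k i + 1 := by
        have : (k i : ℝ) ≤ m i := by exact_mod_cast hi.2
        linarith
      positivity) hLpos hk hv hx.ne'
    have h := ((((hmain.add hk).sub (hlogk.div_const 2)).sub (hL.inv_tendsto_atTop)).sub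
      (hm.mul ((tendsto_const_nhds.sub hp).inv₀ (by norm_num : (1 : ℝ) - 0 ≠ 0))))
    rw [← hrate]
    convert h using 2 with i
    · simp only [Pi.inv_apply]
      ring
    · simp
  have hupper : Tendsto (fun i ↦ (max 0 (k i * log (m i * p i / k i)) + k i - m i * p i) / L i) l
      (𝓝 (c * log (exp 1 * x / c) - x)) := by
    have hmain := tendsto_mul_log_div_div hkpos hmpos hLpos hk hm hx.ne'
    have h := ((tendsto_const_nhds (x := (0 : ℝ))).max hmain).add hk |>.sub hm
    rw [max_eq_right hcx', hrate] at h
    refine h.congr' ?_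
    filter_upwards [hLpos] with i hLi
    have hmax : max 0 (k i * log (m i * p i / k i) / L i)
        = max 0 (k i * log (m i * p i / k i)) / L i := by
      rw [← max_div_div_right hLi.le, zero_div]
    rw [hmax]
    ring
  refine tendsto_of_tendsto_of_tendsto_of_le_of_le' hlower hupper ?_ ?_
  · filter_upwards [hkm, hp0, hp1, hLpos] with i hi hpi hpi1 hLi
    exact div_le_div_of_nonneg_right (le_log_binomCdf hpi hpi1 hi.1 hi.2) hLi.le
  · filter_upwards [hkm, hp0, hp1, hLpos] with i hi hpi hpi1 hLi
    exact div_le_div_of_nonneg_right (log_binomCdf_le hpi hpi1 hi.1 hi.2) hLi.le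

end Asymptotics

theorem exists_eq_rpow_add_of_tendsto_log_div_log {f : ℕ → ℝ} {r : ℝ}
    (hf : ∀ᶠ n in atTop, 0 < f n)
    (h : Tendsto (fun n : ℕ ↦ log (f n) / log n) atTop (𝓝 r)) :
    ∃ e : ℕ → ℝ, Tendsto e atTop (𝓝 0) ∧ ∀ᶠ n in atTop, f n = (n : ℝ) ^ (r + e n) := by
  refine ⟨fun n ↦ log (f n) / log n - r, by simpa using h.sub_const r, ?_⟩
  filter_upwards [hf, eventually_ge_atTop 2] with n hfn hn
  have hn' : (1 : ℝ) < n := by exact_mod_cast hn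
  rw [add_sub_cancel, rpow_def_of_pos (by linarith), mul_div_cancel₀ _ (log_pos hn').ne',
    exp_log hfn]

theorem binomial_lower_tail_asymptotics_general (a ρ τ : ℝ) (ha : 0 < a) (hρ : 0 < ρ)
    (hτa : τ ≤ a)
    (m k : ℕ → ℕ)
    (hm : Filter.Tendsto (fun n => (m n : ℝ) / n) Filter.atTop (𝓝 ρ))
    (hk : Filter.Tendsto (fun n => (k n : ℝ) / Real.log n) Filter.atTop (𝓝 (τ * ρ)))
    (hkm : ∀ n, 1 ≤ k n ∧ k n ≤ m n) :
    ∃ e : ℕ → ℝ, Filter.Tendsto e Filter.atTop (𝓝 0) ∧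
      ∀ᶠ n : ℕ in Filter.atTop,
        binomCdf (a * Real.log n / n) (m n) (k n)
          = (n : ℝ) ^ (-(ρ * (a - τ * Real.log (Real.exp 1 * a / τ))) + e n) := by
  have hL : Tendsto (fun n : ℕ ↦ log n) atTop atTop :=
    tendsto_log_atTop.comp tendsto_natCast_atTop_atTop
  have hp : Tendsto (fun n : ℕ ↦ a * log n / n) atTop (𝓝 0) := by
    simpa [mul_div_assoc] using
      ((isLittleO_log_id_atTop.tendsto_div_nhds_zero).comp tendsto_natCast_atTop_atTop).const_mul a
  have hp0 : ∀ᶠ n : ℕ in atTop, 0 < a * log n / n := by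
    filter_upwards [eventually_ge_atTop 2] with n hn
    have hn' : (1 : ℝ) < n := by exact_mod_cast hn
    have := log_pos hn'
    positivity
  have hmp : Tendsto (fun n : ℕ ↦ m n * (a * log n / n) / log n) atTop (𝓝 (ρ * a)) := by
    refine (hm.mul_const a).congr' ?_
    filter_upwards [hL.eventually_gt_atTop 0] with n hn
    field_simp
  have hrate : τ * ρ * log (exp 1 * (ρ * a) / (τ * ρ)) - ρ * a
      = -(ρ * (a - τ * log (exp 1 * a / τ))) := by
    rw [show exp 1 * (ρ * a) / (τ * ρ) = exp 1 * a / τ by field_simp]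
    ring
  have hlim := tendsto_log_binomCdf_div hL hp hp0 (.of_forall hkm) hk hmp (by positivity)
    (by nlinarith)
  rw [hrate] at hlim
  refine exists_eq_rpow_add_of_tendsto_log_div_log ?_ hlim
  filter_upwards [hp0, hp.eventually (gt_mem_nhds one_pos)] with n hpn hpn1
  exact binomCdf_pos hpn hpn1 (hkm n).2

/-- Let `X ~ Binom(m, a·log n/n)` with `m = ρn + o(n)`, `ρ > 0`, `a > 0`, and let
`kₙ = τρ·log n + o(log n)` with `0 ≤ τ ≤ a`, `kₙ ∈ [m]`. Then
`P(X ≤ kₙ) = n^{-ρ(a - τ·log(ea/τ)) + o(1)}`. -/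
theorem binomial_lower_tail_asymptotics (a ρ τ : ℝ) (ha : 0 < a) (hρ : 0 < ρ)
    (hτ0 : 0 ≤ τ) (hτa : τ ≤ a)
    (m k : ℕ → ℕ)
    (hm : Filter.Tendsto (fun n => (m n : ℝ) / n) Filter.atTop (𝓝 ρ))
    (hk : Filter.Tendsto (fun n => (k n : ℝ) / Real.log n) Filter.atTop (𝓝 (τ * ρ)))
    (hkm : ∀ n, 1 ≤ k n ∧ k n ≤ m n) :
    ∃ e : ℕ → ℝ, Filter.Tendsto e Filter.atTop (𝓝 0) ∧
      ∀ᶠ n : ℕ in Filter.atTop,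
        binomCdf (a * Real.log n / n) (m n) (k n)
          = (n : ℝ) ^ (-(ρ * (a - τ * Real.log (Real.exp 1 * a / τ))) + e n) :=
  binomial_lower_tail_asymptotics_general a ρ τ ha hρ hτa m k hm hk hkm
end

section
/- Let X ~ Binom(m₁, a·log n/n) and R ~ Binom(m₂, b·log n/n) be independent, with a,b > 0. For any integers m₁, m₂, k with k ≤ (m₁a - m₂b)·log n/n, one has P(X - R ≤ k) ≤ n^{-g(m₁/n, m₂/n, a, b, k/log n)}, where for ρ₁,ρ₂ > 0, g(ρ₁,ρ₂,a,b,α) = aρ₁ + bρ₂ - γ - (α/2)·log((γ-α)aρ₁/((γ+α)bρ₂)) with γ = √(α² + 4ρ₁ρ₂ab). -/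
/-!
Exponential tilting: for `t ≥ 0` the indicator of `X - R ≤ k` is at most `e^{t (k - X + R)}`, so
`P(X - R ≤ k) ≤ e^{tk} E[e^{-tX}] E[e^{tR}] ≤ exp(tk + m₁p(e^{-t} - 1) + m₂q(e^t - 1))`.
With `p = a log n / n`, `q = b log n / n` the exponent is `log n` times
`αt + aρ₁(e^{-t} - 1) + bρ₂(e^t - 1)`, which is minimised at `e^t = (γ - α) / (2bρ₂)`,
a root of `bρ₂ u² - αu - aρ₁ = 0`; there it equals `-g`. The hypothesis on `k` is exactly
what makes this optimal `t` nonnegative.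
-/

/-- Binomial pmf `P(X = i)` for `X ~ Binom(m, p)`. -/
noncomputable def binomPmf (p : ℝ) (m i : ℕ) : ℝ :=
  (m.choose i : ℝ) * p ^ i * (1 - p) ^ (m - i)

/-- `P(X - R ≤ k)` for independent `X ~ Binom(m₁,p)`, `R ~ Binom(m₂,q)`. -/
noncomputable def probDiffLE (p q : ℝ) (m₁ m₂ : ℕ) (k : ℤ) : ℝ :=
  ∑ i ∈ Finset.range (m₁ + 1), ∑ j ∈ Finset.range (m₂ + 1),
    if (i : ℤ) - (j : ℤ) ≤ k then binomPmf p m₁ i * binomPmf q m₂ j else 0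

open Real Finset

lemma binomPmf_nonneg {p : ℝ} (hp0 : 0 ≤ p) (hp1 : p ≤ 1) (m i : ℕ) :
    0 ≤ binomPmf p m i := by
  have : 0 ≤ 1 - p := by linarith
  unfold binomPmf
  positivity

lemma sum_binomPmf_mul_pow (p s : ℝ) (m : ℕ) :
    ∑ i ∈ range (m + 1), binomPmf p m i * s ^ i = (1 - p + p * s) ^ m := by
  rw [show 1 - p + p * s = p * s + (1 - p) by ring, add_pow]
  refine sum_congr rfl fun i _ => ?_
  unfold binomPmf
  ring

lemma one_add_pow_le_exp_mul {x : ℝ} (hx : -1 ≤ x) (m : ℕ) : (1 + x) ^ m ≤ exp (m * x) := by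
  rw [exp_nat_mul]
  exact pow_le_pow_left₀ (by linarith) (by linarith [add_one_le_exp x]) m

lemma probDiffLE_le_mul_mgf {p q t : ℝ} (hp0 : 0 ≤ p) (hp1 : p ≤ 1) (hq0 : 0 ≤ q)
    (hq1 : q ≤ 1) (ht : 0 ≤ t) (m₁ m₂ : ℕ) (k : ℤ) :
    probDiffLE p q m₁ m₂ k ≤
      exp (t * k) * (1 - p + p * exp (-t)) ^ m₁ * (1 - q + q * exp t) ^ m₂ := by
  have tilt : ∀ i j : ℕ, (i : ℤ) - j ≤ k → 1 ≤ exp (t * k) * exp (-t) ^ i * exp t ^ j := by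
    intro i j hij
    have hij' : (i : ℝ) - j ≤ k := by exact_mod_cast hij
    rw [← exp_nat_mul, ← exp_nat_mul, ← exp_add, ← exp_add]
    exact one_le_exp (by nlinarith)
  calc probDiffLE p q m₁ m₂ k
      ≤ ∑ i ∈ range (m₁ + 1), ∑ j ∈ range (m₂ + 1),
          binomPmf p m₁ i * binomPmf q m₂ j * (exp (t * k) * exp (-t) ^ i * exp t ^ j) := by
        refine sum_le_sum fun i _ => sum_le_sum fun j _ => ?_
        have hpq := mul_nonneg (binomPmf_nonneg hp0 hp1 m₁ i) (binomPmf_nonneg hq0 hq1 m₂ j)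
        split_ifs with hij
        · exact le_mul_of_one_le_right hpq (tilt i j hij)
        · exact mul_nonneg hpq (by positivity)
    _ = exp (t * k) * (1 - p + p * exp (-t)) ^ m₁ * (1 - q + q * exp t) ^ m₂ := by
        rw [← sum_binomPmf_mul_pow, ← sum_binomPmf_mul_pow, mul_assoc, sum_mul_sum, mul_sum]
        refine sum_congr rfl fun i _ => ?_
        rw [mul_sum]
        refine sum_congr rfl fun j _ => ?_
        ring

lemma probDiffLE_le_exp {p q t : ℝ} (hp0 : 0 ≤ p) (hp1 : p ≤ 1) (hq0 : 0 ≤ q) (hq1 : q ≤ 1)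
    (ht : 0 ≤ t) (m₁ m₂ : ℕ) (k : ℤ) :
    probDiffLE p q m₁ m₂ k ≤
      exp (t * k + m₁ * (p * (exp (-t) - 1)) + m₂ * (q * (exp t - 1))) := by
  have bound : ∀ {r : ℝ} (s : ℝ) (m : ℕ), 0 ≤ r → r ≤ 1 → 0 ≤ s →
      0 ≤ (1 - r + r * s) ^ m ∧ (1 - r + r * s) ^ m ≤ exp (m * (r * (s - 1))) := by
    intro r s m hr0 hr1 hs
    have : 0 ≤ r * s := mul_nonneg hr0 hs
    have hx : -1 ≤ r * (s - 1) := by nlinarith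
    rw [show 1 - r + r * s = 1 + r * (s - 1) by ring]
    exact ⟨pow_nonneg (by linarith) m, one_add_pow_le_exp_mul hx m⟩
  obtain ⟨hX0, hX⟩ := bound (exp (-t)) m₁ hp0 hp1 (exp_nonneg _)
  obtain ⟨hR0, hR⟩ := bound (exp t) m₂ hq0 hq1 (exp_nonneg _)
  calc probDiffLE p q m₁ m₂ k
      ≤ exp (t * k) * (1 - p + p * exp (-t)) ^ m₁ * (1 - q + q * exp t) ^ m₂ :=
        probDiffLE_le_mul_mgf hp0 hp1 hq0 hq1 ht m₁ m₂ k
    _ ≤ exp (t * k) * exp (m₁ * (p * (exp (-t) - 1))) * exp (m₂ * (q * (exp t - 1))) := by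
        gcongr
    _ = _ := by rw [← exp_add, ← exp_add]

lemma one_le_optimal_tilt {ρ₂ b α β γ : ℝ} (hρ₂ : 0 < ρ₂) (hb : 0 < b) (hγ0 : 0 ≤ γ)
    (hγ : γ ^ 2 = α ^ 2 + 4 * β * (ρ₂ * b)) (hα : α ≤ β - ρ₂ * b) :
    1 ≤ (γ - α) / (2 * (ρ₂ * b)) := by
  have hρ₂b := mul_pos hρ₂ hb
  rw [le_div_iff₀ (by positivity)]
  nlinarith [sq_nonneg (γ + α + 2 * (ρ₂ * b))]

lemma exponent_at_optimal_tilt {ρ₁ ρ₂ a b α γ u : ℝ} (hρ₁ : 0 < ρ₁) (hρ₂ : 0 < ρ₂) (ha : 0 < a)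
    (hb : 0 < b) (hγ0 : 0 ≤ γ) (hγ : γ ^ 2 = α ^ 2 + 4 * ρ₁ * ρ₂ * a * b)
    (hu : u = (γ - α) / (2 * (ρ₂ * b))) :
    α * log u + ρ₁ * a * (u⁻¹ - 1) + ρ₂ * b * (u - 1) =
      -(a * ρ₁ + b * ρ₂ - γ - α / 2 * log ((γ - α) * a * ρ₁ / ((γ + α) * b * ρ₂))) := by
  have : 0 < 4 * ρ₁ * ρ₂ * a * b := by positivity
  have hγα : 0 < γ - α := by nlinarith
  have hγα' : 0 < γ + α := by nlinarith
  have hu0 : 0 < u := hu ▸ div_pos hγα (by positivity)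
  -- `u` solves `bρ₂ u² - αu - aρ₁ = 0`, whose product of roots gives `aρ₁ / u = (γ + α) / 2`.
  have hinv : ρ₁ * a * u⁻¹ = (γ + α) / 2 := by
    rw [hu]
    field_simp
    linear_combination -hγ
  have hsq : u ^ 2 = (γ - α) * a * ρ₁ / ((γ + α) * b * ρ₂) := by
    rw [hu]
    field_simp
    linear_combination hγ
  have hlog : log ((γ - α) * a * ρ₁ / ((γ + α) * b * ρ₂)) = 2 * log u := by
    rw [← hsq, log_pow]
    norm_num
  have hlin : ρ₂ * b * u = (γ - α) / 2 := by
    rw [hu]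
    field_simp
  rw [hlog, mul_sub, hinv, mul_sub, hlin]
  ring

/-- Non-asymptotic Chernoff bound: for independent `X ~ Binom(m₁, a log n/n)` and
`R ~ Binom(m₂, b log n/n)` and any integer `k ≤ (m₁a - m₂b)·log n/n`,
`P(X - R ≤ k) ≤ n^{-g(m₁/n, m₂/n, a, b, k/log n)}` where
`g(ρ₁,ρ₂,a,b,α) = aρ₁ + bρ₂ - γ - (α/2)·log((γ-α)aρ₁/((γ+α)bρ₂))`,
`γ = √(α² + 4ρ₁ρ₂ab)`. -/
theorem binomial_difference_tail_bound (n m₁ m₂ : ℕ) (k : ℤ) (a b : ℝ)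
    (hn : 2 ≤ n) (hm₁ : 0 < m₁) (hm₂ : 0 < m₂) (ha : 0 < a) (hb : 0 < b)
    (hp : a * Real.log n / n ≤ 1) (hq : b * Real.log n / n ≤ 1)
    (hk : (k : ℝ) ≤ ((m₁ : ℝ) * a - (m₂ : ℝ) * b) * Real.log n / n)
    (ρ₁ ρ₂ α γ g : ℝ)
    (hρ₁ : ρ₁ = (m₁ : ℝ) / n) (hρ₂ : ρ₂ = (m₂ : ℝ) / n)
    (hα : α = (k : ℝ) / Real.log n)
    (hγ : γ = Real.sqrt (α ^ 2 + 4 * ρ₁ * ρ₂ * a * b))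
    (hg : g = a * ρ₁ + b * ρ₂ - γ -
      α / 2 * Real.log ((γ - α) * a * ρ₁ / ((γ + α) * b * ρ₂))) :
    probDiffLE (a * Real.log n / n) (b * Real.log n / n) m₁ m₂ k ≤ (n : ℝ) ^ (-g) := by
  have hn0 : (0 : ℝ) < n := by positivity
  have hL : 0 < log n := log_pos (by exact_mod_cast hn)
  have hρ₁0 : 0 < ρ₁ := by rw [hρ₁]; positivity
  have hρ₂0 : 0 < ρ₂ := by rw [hρ₂]; positivity
  have hγ2 : γ ^ 2 = α ^ 2 + 4 * ρ₁ * ρ₂ * a * b := by rw [hγ]; exact sq_sqrt (by positivity)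
  have hγ0 : 0 ≤ γ := hγ ▸ sqrt_nonneg _
  have hαle : α ≤ ρ₁ * a - ρ₂ * b := by
    rw [hα, div_le_iff₀ hL]
    calc (k : ℝ) ≤ (m₁ * a - m₂ * b) * log n / n := hk
      _ = (ρ₁ * a - ρ₂ * b) * log n := by rw [hρ₁, hρ₂]; field_simp
  set u := (γ - α) / (2 * (ρ₂ * b)) with hu
  have hu1 : 1 ≤ u := one_le_optimal_tilt hρ₂0 hb hγ0 (by linear_combination hγ2) hαle
  have hscale : log u * k + m₁ * (a * log n / n * (u⁻¹ - 1)) + m₂ * (b * log n / n * (u - 1)) =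
      log n * (α * log u + ρ₁ * a * (u⁻¹ - 1) + ρ₂ * b * (u - 1)) := by
    rw [hα, hρ₁, hρ₂]
    field_simp
  have hexp := probDiffLE_le_exp (by positivity) hp (by positivity) hq (log_nonneg hu1) m₁ m₂ k
  rwa [exp_neg, exp_log (by linarith), hscale,
    exponent_at_optimal_tilt hρ₁0 hρ₂0 ha hb hγ0 hγ2 hu, ← hg, ← rpow_def_of_pos hn0] at hexp
end

section
/- Let X₁,…,Xₘ be i.i.d. random variables taking value +1 with probability p(1-ε), value -1 with probability pε, and 0 with probability 1-p, where ε ∈ (0,1/2] is a fixed constant, m = n + o(n), and p = a·log n/n with a > 0. If kₙ ∈ [m] with kₙ = (1+o(1))·log n/log log n, then P(∑ᵢ₌₁ᵐ Xᵢ ≤ kₙ) ≤ n^{-a(√(1-ε) - √ε)² + o(1)} as n → ∞. -/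
open Filter Topology

/-- `P(∑ᵢ₌₁ᵐ Xᵢ ≤ k)` where `X₁,…,Xₘ` are i.i.d. with `P(X=1)=p(1-ε)`,
`P(X=-1)=pε`, `P(X=0)=1-p`: the sum over the numbers `s` of `+1`s and `t` of `-1`s. -/
noncomputable def signedSumLE (p ε : ℝ) (m : ℕ) (k : ℤ) : ℝ :=
  ∑ s ∈ Finset.range (m + 1), ∑ t ∈ Finset.range (m + 1),
    if s + t ≤ m ∧ (s : ℤ) - (t : ℤ) ≤ k then
      (m.choose s : ℝ) * ((m - s).choose t : ℝ) *
        (p * (1 - ε)) ^ s * (p * ε) ^ t * (1 - p) ^ (m - s - t)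
    else 0

/-! Exponential tilting: for `λ ≥ 0` the indicator of `s - t ≤ k` is at most `exp (λ (k - s + t))`,
so `P(∑ Xᵢ ≤ k) ≤ e^{λk} 𝔼[e^{-λX}]^m`. At `λ = log (√(1-ε)/√ε)` the moment generating factor is
`1 - p (√(1-ε) - √ε)²`, and with `1 - x ≤ e^{-x}` the bound becomes
`exp (λ k - p (√(1-ε) - √ε)² m)`. For `p = a log n / n` and `m ~ n` the second term contributes
`n^{-a(√(1-ε)-√ε)²}`, while `λ k = o(log n)` because `k ~ log n / log log n`. -/

namespace SignedSum

open Real Finset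

lemma sum_range_sum_range_trinomial (x y z : ℝ) (m : ℕ) :
    ∑ s ∈ range (m + 1), ∑ t ∈ range (m + 1),
      (if s + t ≤ m then (m.choose s : ℝ) * ((m - s).choose t : ℝ) * x ^ s * y ^ t * z ^ (m - s - t)
        else 0) = (x + y + z) ^ m := by
  rw [add_assoc, add_pow]
  refine sum_congr rfl fun s hs => ?_
  have hrange : (range (m + 1)).filter (fun t => s + t ≤ m) = range (m - s + 1) := by
    have := mem_range.mp hs
    ext t; simp only [mem_filter, mem_range]; omega
  rw [add_pow, mul_sum, sum_mul, ← sum_filter, hrange]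
  exact sum_congr rfl fun t _ => by ring

lemma signedSumLE_le_exp_mul_pow {p ε : ℝ} (hp0 : 0 ≤ p) (hp1 : p ≤ 1) (hε0 : 0 ≤ ε)
    (hε1 : ε ≤ 1) {lam : ℝ} (hlam : 0 ≤ lam) (m : ℕ) (k : ℤ) :
    signedSumLE p ε m k ≤
      exp (lam * k) * (p * (1 - ε) * exp (-lam) + p * ε * exp lam + (1 - p)) ^ m := by
  rw [← sum_range_sum_range_trinomial, mul_sum]
  refine sum_le_sum fun s _ => ?_
  rw [mul_sum]
  refine sum_le_sum fun t _ => ?_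
  have h1ε : 0 ≤ 1 - ε := by linarith
  have h1p : 0 ≤ 1 - p := by linarith
  split_ifs with hst hst' hst'
  · have htilt : 0 ≤ lam * (k - s + t) := by
      have : (s : ℝ) - t ≤ k := by exact_mod_cast hst.2
      exact mul_nonneg hlam (by linarith)
    have hexp : exp (lam * k) * (exp (-lam) ^ s * exp lam ^ t) = exp (lam * (k - s + t)) := by
      rw [← exp_nat_mul, ← exp_nat_mul, ← exp_add, ← exp_add]; ring_nf
    calc _ ≤ (m.choose s : ℝ) * ((m - s).choose t : ℝ) * (p * (1 - ε)) ^ s * (p * ε) ^ t *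
            (1 - p) ^ (m - s - t) * exp (lam * (k - s + t)) :=
          le_mul_of_one_le_right (by positivity) (one_le_exp htilt)
      _ = _ := by rw [← hexp]; simp only [mul_pow]; ring
  · exact absurd hst.1 hst'
  · positivity
  · simp

/-- The optimal tilt `λ* = log (√(1-ε)/√ε) = (1/2) log ((1-ε)/ε)`. -/
lemma mgf_at_optimalTilt (p : ℝ) {ε : ℝ} (hε0 : 0 < ε) (hε1 : ε < 1) :
    p * (1 - ε) * exp (-log (√(1 - ε) / √ε)) + p * ε * exp (log (√(1 - ε) / √ε)) + (1 - p)
      = 1 - p * (√(1 - ε) - √ε) ^ 2 := by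
  have hA : 0 < √(1 - ε) := sqrt_pos.mpr (by linarith)
  have hB : 0 < √ε := sqrt_pos.mpr hε0
  have hA2 : √(1 - ε) ^ 2 = 1 - ε := sq_sqrt (by linarith)
  have hB2 : √ε ^ 2 = ε := sq_sqrt hε0.le
  have hdown : (1 - ε) * (√ε / √(1 - ε)) = √(1 - ε) * √ε := by
    field_simp; rw [hA2]
  have hup : ε * (√(1 - ε) / √ε) = √(1 - ε) * √ε := by
    field_simp; rw [hB2]
  rw [exp_neg, exp_log (by positivity), inv_div, mul_assoc, hdown, mul_assoc, hup]
  linear_combination p * (hA2 + hB2)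

lemma signedSumLE_le_exp {p ε : ℝ} (hp0 : 0 ≤ p) (hp1 : p ≤ 1) (hε0 : 0 < ε) (hε2 : ε ≤ 1 / 2)
    (m : ℕ) (k : ℤ) :
    signedSumLE p ε m k ≤ exp (log (√(1 - ε) / √ε) * k - p * (√(1 - ε) - √ε) ^ 2 * m) := by
  have hlam : 0 ≤ log (√(1 - ε) / √ε) :=
    log_nonneg <| (one_le_div (sqrt_pos.mpr hε0)).mpr (sqrt_le_sqrt (by linarith))
  have hmgf := mgf_at_optimalTilt p hε0 (by linarith)
  have hmgf0 : 0 ≤ 1 - p * (√(1 - ε) - √ε) ^ 2 := by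
    rw [← hmgf]
    have : 0 ≤ 1 - ε := by linarith
    have : 0 ≤ 1 - p := by linarith
    positivity
  calc signedSumLE p ε m k
      ≤ exp (log (√(1 - ε) / √ε) * k) * (1 - p * (√(1 - ε) - √ε) ^ 2) ^ m := by
        rw [← hmgf]
        exact signedSumLE_le_exp_mul_pow hp0 hp1 hε0.le (by linarith) hlam m k
    _ ≤ exp (log (√(1 - ε) / √ε) * k) * exp (-(p * (√(1 - ε) - √ε) ^ 2)) ^ m := by
        gcongr
        exact one_sub_le_exp_neg _
    _ = _ := by rw [← exp_nat_mul, ← exp_add]; ring_nf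

end SignedSum

open Real in
lemma tendsto_div_log_of_tendsto_mul_log_log_div_log {f : ℕ → ℝ} {L : ℝ}
    (hf : Tendsto (fun n => f n * log (log n) / log n) atTop (𝓝 L)) :
    Tendsto (fun n => f n / log n) atTop (𝓝 0) := by
  have hloglog : Tendsto (fun n : ℕ => log (log n)) atTop atTop :=
    tendsto_log_atTop.comp (tendsto_log_atTop.comp tendsto_natCast_atTop_atTop)
  have h := hf.mul hloglog.inv_tendsto_atTop
  rw [mul_zero] at h
  refine h.congr' ?_
  filter_upwards [hloglog.eventually_gt_atTop 0] with n hn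
  simp only [Pi.inv_apply]
  field_simp

open Real in
lemma eventually_mul_log_div_le_one (a : ℝ) :
    ∀ᶠ n : ℕ in atTop, a * log n / n ≤ 1 := by
  have h : Tendsto (fun n : ℕ => a * (log n / n)) atTop (𝓝 (a * 0)) :=
    (isLittleO_log_id_atTop.tendsto_div_nhds_zero.comp tendsto_natCast_atTop_atTop).const_mul a
  rw [mul_zero] at h
  filter_upwards [h.eventually (eventually_le_nhds one_pos)] with n hn
  rwa [mul_div_assoc]

theorem censored_sum_lower_tail_general (a ε : ℝ) (ha : 0 < a) (hε : 0 < ε) (hε2 : ε ≤ 1 / 2)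
    (m k : ℕ → ℕ)
    (hm : Filter.Tendsto (fun n => (m n : ℝ) / n) Filter.atTop (𝓝 1))
    (hk : Filter.Tendsto
      (fun n => (k n : ℝ) * Real.log (Real.log n) / Real.log n) Filter.atTop (𝓝 1)) :
    ∃ e : ℕ → ℝ, Filter.Tendsto e Filter.atTop (𝓝 0) ∧
      ∀ᶠ n : ℕ in Filter.atTop,
        signedSumLE (a * Real.log n / n) ε (m n) (k n)
          ≤ (n : ℝ) ^ (-(a * (Real.sqrt (1 - ε) - Real.sqrt ε) ^ 2) + e n) := by
  set c := (Real.sqrt (1 - ε) - Real.sqrt ε) ^ 2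
  set lam := Real.log (Real.sqrt (1 - ε) / Real.sqrt ε)
  refine ⟨fun n => a * c + lam * ((k n : ℝ) / Real.log n) - a * c * ((m n : ℝ) / n), ?_, ?_⟩
  · have h := ((tendsto_const_nhds (x := a * c)).add
      ((tendsto_div_log_of_tendsto_mul_log_log_div_log hk).const_mul lam)).sub (hm.const_mul (a * c))
    simpa using h
  · filter_upwards [eventually_mul_log_div_le_one a, eventually_gt_atTop 1] with n hp1 hn
    have hn1 : (1 : ℝ) < n := by exact_mod_cast hn
    have hlog : 0 < Real.log n := Real.log_pos hn1
    calc signedSumLE (a * Real.log n / n) ε (m n) (k n)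
        ≤ Real.exp (lam * (k n : ℤ) - a * Real.log n / n * c * m n) :=
          SignedSum.signedSumLE_le_exp (by positivity) hp1 hε hε2 (m n) (k n)
      _ = _ := by
          rw [Real.rpow_def_of_pos (by linarith)]
          congr 1
          field_simp
          push_cast
          ring

/-- Upper tail bound for the censored block model: with `ε ∈ (0,1/2]`, `m = n + o(n)`,
`p = a log n/n`, and `kₙ = (1+o(1)) log n/log log n`, `kₙ ∈ [m]`, one has
`P(∑ Xᵢ ≤ kₙ) ≤ n^{-a(√(1-ε)-√ε)² + o(1)}`. -/
theorem censored_sum_lower_tail (a ε : ℝ) (ha : 0 < a) (hε : 0 < ε) (hε2 : ε ≤ 1 / 2)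
    (m k : ℕ → ℕ)
    (hm : Filter.Tendsto (fun n => (m n : ℝ) / n) Filter.atTop (𝓝 1))
    (hk : Filter.Tendsto
      (fun n => (k n : ℝ) * Real.log (Real.log n) / Real.log n) Filter.atTop (𝓝 1))
    (hkm : ∀ n, 1 ≤ k n ∧ k n ≤ m n) :
    ∃ e : ℕ → ℝ, Filter.Tendsto e Filter.atTop (𝓝 0) ∧
      ∀ᶠ n : ℕ in Filter.atTop,
        signedSumLE (a * Real.log n / n) ε (m n) (k n)
          ≤ (n : ℝ) ^ (-(a * (Real.sqrt (1 - ε) - Real.sqrt ε) ^ 2) + e n) :=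
  censored_sum_lower_tail_general a ε ha hε hε2 m k hm hk
end

section
/- Let the n×n symmetric matrix B* satisfy B*|_{C_k×C_{k'}}(i,j) = y_{kk'}(i) + z_{kk'}(j) for all k < k' and B*|_{C_k×C_k} = 0, where C₁,…,C_r partition [n]. Then for every x ∈ ℝⁿ orthogonal to the span of the cluster indicator vectors ξ₁,…,ξ_r, one has xᵀB*x = 0. -/
/-!
Setting `w i k = y_{c i, k}(i)` for `c i < k`, `w i k = z_{k, c i}(i)` for `k < c i` and `0`
otherwise, symmetry of `B` gives `B i j = w i (c j) + w j (c i)` for all `i, j`, i.e. `B = W + Wᵀ` where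
`W i j = w i (c j)` is constant in `j` on each cluster. Hence every row of `W` lies in the span
of the cluster indicators, so `W x = 0`, and `xᵀ B x = xᵀ W x + (W x)ᵀ x = 0`.
-/

open Matrix

section ClusterConstant

variable {ι κ R : Type*} [Fintype ι] [DecidableEq κ] [CommSemiring R] {c : ι → κ} {x : ι → R}

theorem sum_mul_comp_eq_zero_of_sum_fiber_eq_zero (hx : ∀ k, ∑ i with c i = k, x i = 0)
    (f : κ → R) : ∑ i, x i * f (c i) = 0 := by
  rw [← Finset.sum_fiberwise_of_maps_to (t := Finset.univ.image c) fun i _ =>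
    Finset.mem_image_of_mem c (Finset.mem_univ i)]
  refine Finset.sum_eq_zero fun k _ => ?_
  calc ∑ i with c i = k, x i * f (c i)
      = ∑ i with c i = k, x i * f k := Finset.sum_congr rfl fun i hi => by
        rw [(Finset.mem_filter.mp hi).2]
    _ = 0 := by rw [← Finset.sum_mul, hx k, zero_mul]

theorem mulVec_of_comp_eq_zero (hx : ∀ k, ∑ i with c i = k, x i = 0) (w : ι → κ → R) :
    of (fun i j => w i (c j)) *ᵥ x = 0 := by
  ext i
  simpa only [mulVec, dotProduct, of_apply, Pi.zero_apply, mul_comm] using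
    sum_mul_comp_eq_zero_of_sum_fiber_eq_zero hx (w i)

theorem dotProduct_mulVec_eq_zero_of_apply_eq_add (hx : ∀ k, ∑ i with c i = k, x i = 0)
    {B : Matrix ι ι R} (w : ι → κ → R) (hB : ∀ i j, B i j = w i (c j) + w j (c i)) :
    x ⬝ᵥ B *ᵥ x = 0 := by
  set W : Matrix ι ι R := of fun i j => w i (c j)
  have hBW : B = W + Wᵀ := by
    ext i j
    exact hB i j
  have hW : W *ᵥ x = 0 := mulVec_of_comp_eq_zero hx w
  rw [hBW, add_mulVec, dotProduct_add, hW, dotProduct_zero, zero_add, mulVec_transpose,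
    dotProduct_comm, ← dotProduct_mulVec, hW, dotProduct_zero]

end ClusterConstant

section BlockStructure

variable {ι κ R : Type*} [LinearOrder κ] [AddCommMonoid R]

def clusterOffset (c : ι → κ) (y z : κ → κ → ι → R) (i : ι) (k : κ) : R :=
  if c i < k then y (c i) k i else if k < c i then z k (c i) i else 0

theorem apply_eq_clusterOffset_add {c : ι → κ} {B : Matrix ι ι R}
    (hBsymm : B.IsSymm) {y z : κ → κ → ι → R} (hdiag : ∀ i j, c i = c j → B i j = 0)
    (hblock : ∀ i j, c i < c j → B i j = y (c i) (c j) i + z (c i) (c j) j) (i j : ι) :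
    B i j = clusterOffset c y z i (c j) + clusterOffset c y z j (c i) := by
  rcases lt_trichotomy (c i) (c j) with h | h | h
  · simp [clusterOffset, h, h.not_gt, hblock i j h]
  · simp [clusterOffset, h, hdiag i j h]
  · simp [clusterOffset, h, h.not_gt, ← hBsymm.apply i j, hblock j i h, add_comm]

end BlockStructure

/-- If the symmetric matrix `B` vanishes on diagonal blocks and on each off-diagonal
block `C_k × C_{k'}` has the form `B(i,j) = y_{kk'}(i) + z_{kk'}(j)`, then `xᵀBx = 0`
for every `x` orthogonal to all cluster indicator vectors. -/
theorem block_structured_quadratic_form_vanishes {n r : ℕ}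
    (c : Fin n → Fin r)
    (B : Matrix (Fin n) (Fin n) ℝ) (hBsymm : B.IsSymm)
    (y z : Fin r → Fin r → Fin n → ℝ)
    (hdiag : ∀ i j, c i = c j → B i j = 0)
    (hblock : ∀ i j, c i < c j → B i j = y (c i) (c j) i + z (c i) (c j) j) :
    ∀ x : Fin n → ℝ,
      (∀ k : Fin r, ∑ i, (if c i = k then (1 : ℝ) else 0) * x i = 0) →
      dotProduct x (B.mulVec x) = 0 := by
  intro x hx
  have hfiber : ∀ k, ∑ i with c i = k, x i = 0 := fun k => by
    simpa only [ite_mul, one_mul, zero_mul, ← Finset.sum_filter] using hx k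
  exact dotProduct_mulVec_eq_zero_of_apply_eq_add hfiber _
    (apply_eq_clusterOffset_add hBsymm hdiag hblock)
end
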